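/- arXiv:1910.02331 — 5 statements merged into one kernel-verified Lean document; each statement's English description precedes it below -/
import Mathlib

section
/- Let k ≤ 0 and let f : [0, ∞) → ℝ be twice differentiable with f'' ≤ -k·f, f(0) = 1, and f(t) > 0 for all t ≥ 0. Then f(t) ≥ exp(-√(-k)·t) for all t ≥ 0. In particular, if k = 0 then f(t) ≥ 1 for all t ≥ 0. -/
/-!
Put `c = √(-k)`, so that `f'' ≤ c² f` (using `f > 0` when `k > 0`). The function
`w = f' + c f` satisfies `w' - c w = f'' - c² f ≤ 0`, so `w e^{-ct}` is nonincreasing. If `w`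
became negative at some `t₀`, it would stay below `w t₀ < 0` from then on, and
`(f e^{ct})' = w e^{ct}` would be bounded by a negative constant, forcing `f e^{ct}` below zero.
Hence `w ≥ 0`, i.e. `f e^{ct}` is nondecreasing, and `f t e^{ct} ≥ f 0 = 1`.
-/

open Real Set

theorem monotoneOn_Ici_of_hasDerivAt_nonneg {g g' : ℝ → ℝ} {a : ℝ}
    (hg : ∀ t, a ≤ t → HasDerivAt g (g' t) t) (hg' : ∀ t, a < t → 0 ≤ g' t) :
    MonotoneOn g (Ici a) :=
  monotoneOn_of_hasDerivWithinAt_nonneg (convex_Ici a)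
    (fun t ht => (hg t ht).continuousAt.continuousWithinAt)
    (fun t ht => (hg t (interior_Ici.subset ht).le).hasDerivWithinAt)
    (fun t ht => hg' t (interior_Ici.subset ht))

theorem antitoneOn_Ici_of_hasDerivAt_nonpos {g g' : ℝ → ℝ} {a : ℝ}
    (hg : ∀ t, a ≤ t → HasDerivAt g (g' t) t) (hg' : ∀ t, a < t → g' t ≤ 0) :
    AntitoneOn g (Ici a) :=
  antitoneOn_of_hasDerivWithinAt_nonpos (convex_Ici a)
    (fun t ht => (hg t ht).continuousAt.continuousWithinAt)
    (fun t ht => (hg t (interior_Ici.subset ht).le).hasDerivWithinAt)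
    (fun t ht => hg' t (interior_Ici.subset ht))

theorem hasDerivAt_mul_exp_const_mul {f : ℝ → ℝ} {f' c t : ℝ} (hf : HasDerivAt f f' t) :
    HasDerivAt (fun s => f s * exp (c * s)) ((f' + c * f t) * exp (c * t)) t :=
  (hf.fun_mul ((hasDerivAt_id' t).const_mul c).exp).congr_deriv (by ring)

theorem exists_neg_of_hasDerivAt_le_neg {g g' : ℝ → ℝ} {a C : ℝ} (hC : C < 0)
    (hg : ∀ t, a ≤ t → HasDerivAt g (g' t) t) (hg' : ∀ t, a < t → g' t ≤ C) :
    ∃ t, a ≤ t ∧ g t < 0 := by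
  have hanti : AntitoneOn (fun t => g t - C * t) (Ici a) :=
    antitoneOn_Ici_of_hasDerivAt_nonpos
      (fun t ht => (hg t ht).fun_sub ((hasDerivAt_id' t).const_mul C))
      (fun t ht => by linarith [hg' t ht])
  set T := a + (|g a| + 1) / -C
  have haT : a ≤ T := le_add_of_nonneg_right (div_nonneg (by positivity) (neg_nonneg.2 hC.le))
  have hCT : C * T = C * a - |g a| - 1 := by
    simp only [T]
    field_simp [hC.ne]
    ring
  refine ⟨T, haT, ?_⟩
  have := hanti self_mem_Ici haT haT
  simp only at this
  linarith [le_abs_self (g a)]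

theorem antitoneOn_mul_exp_neg_of_hasDerivAt_le {w w' : ℝ → ℝ} {a c : ℝ}
    (hw : ∀ t, a ≤ t → HasDerivAt w (w' t) t) (hle : ∀ t, a < t → w' t ≤ c * w t) :
    AntitoneOn (fun t => w t * exp (-c * t)) (Ici a) :=
  antitoneOn_Ici_of_hasDerivAt_nonpos (fun t ht => hasDerivAt_mul_exp_const_mul (hw t ht))
    (fun t ht => mul_nonpos_of_nonpos_of_nonneg (by linarith [hle t ht]) (exp_pos _).le)

theorem deriv_add_mul_self_nonneg_of_second_deriv_le {f f' f'' : ℝ → ℝ} {a c : ℝ} (hc : 0 ≤ c)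
    (hf : ∀ t, a ≤ t → HasDerivAt f (f' t) t) (hf' : ∀ t, a ≤ t → HasDerivAt f' (f'' t) t)
    (hle : ∀ t, a ≤ t → f'' t ≤ c ^ 2 * f t) (hpos : ∀ t, a ≤ t → 0 < f t) :
    ∀ t, a ≤ t → 0 ≤ f' t + c * f t := by
  set w := fun t => f' t + c * f t
  have hw : ∀ t, a ≤ t → HasDerivAt w (f'' t + c * f' t) t :=
    fun t ht => (hf' t ht).fun_add ((hf t ht).const_mul c)
  intro t₀ ht₀
  by_contra! hwt₀
  change w t₀ < 0 at hwt₀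
  have hanti : AntitoneOn (fun t => w t * exp (-c * t)) (Ici t₀) :=
    antitoneOn_mul_exp_neg_of_hasDerivAt_le (fun t ht => hw t (ht₀.trans ht))
      fun t ht => by nlinarith [hle t (ht₀.trans ht.le)]
  have hw_le : ∀ t, t₀ ≤ t → w t ≤ w t₀ := by
    intro t ht
    have hdecay : w t ≤ w t₀ * exp (c * (t - t₀)) := by
      rw [show c * (t - t₀) = -c * t₀ - (-c * t) by ring, exp_sub, mul_div_assoc']
      exact (le_div_iff₀ (exp_pos _)).2 (hanti self_mem_Ici ht ht)
    nlinarith [one_le_exp (mul_nonneg hc (sub_nonneg.2 ht))]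
  have hslope : ∀ t, t₀ < t → w t * exp (c * t) ≤ w t₀ * exp (c * t₀) := fun t ht =>
    calc w t * exp (c * t) ≤ w t₀ * exp (c * t) :=
          mul_le_mul_of_nonneg_right (hw_le t ht.le) (exp_pos _).le
      _ ≤ w t₀ * exp (c * t₀) :=
          mul_le_mul_of_nonpos_left (exp_le_exp.2 (mul_le_mul_of_nonneg_left ht.le hc)) hwt₀.le
  obtain ⟨t, ht, hneg⟩ := exists_neg_of_hasDerivAt_le_neg (mul_neg_of_neg_of_pos hwt₀ (exp_pos _))
    (fun t ht => hasDerivAt_mul_exp_const_mul (hf t (ht₀.trans ht))) hslope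
  exact hneg.not_ge (mul_pos (hpos t (ht₀.trans ht)) (exp_pos _)).le

theorem mul_exp_neg_le_of_second_deriv_le {f f' f'' : ℝ → ℝ} {a c : ℝ} (hc : 0 ≤ c)
    (hf : ∀ t, a ≤ t → HasDerivAt f (f' t) t) (hf' : ∀ t, a ≤ t → HasDerivAt f' (f'' t) t)
    (hle : ∀ t, a ≤ t → f'' t ≤ c ^ 2 * f t) (hpos : ∀ t, a ≤ t → 0 < f t) :
    ∀ t, a ≤ t → f a * exp (-c * (t - a)) ≤ f t := by
  intro t ht
  have hmono : MonotoneOn (fun t => f t * exp (c * t)) (Ici a) :=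
    monotoneOn_Ici_of_hasDerivAt_nonneg (fun t ht => hasDerivAt_mul_exp_const_mul (hf t ht))
      fun t ht => mul_nonneg
        (deriv_add_mul_self_nonneg_of_second_deriv_le hc hf hf' hle hpos t ht.le) (exp_pos _).le
  have := hmono self_mem_Ici ht ht
  rw [show -c * (t - a) = c * a - c * t by ring, exp_sub, mul_div_assoc']
  exact (div_le_iff₀ (exp_pos _)).2 this

theorem stmt_0_general (k : ℝ) (f f' f'' : ℝ → ℝ)
    (hd1 : ∀ t, 0 ≤ t → HasDerivAt f (f' t) t)
    (hd2 : ∀ t, 0 ≤ t → HasDerivAt f' (f'' t) t)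
    (hineq : ∀ t, 0 ≤ t → f'' t ≤ -k * f t)
    (hf0 : f 0 = 1)
    (hpos : ∀ t, 0 ≤ t → 0 < f t) :
    ∀ t, 0 ≤ t → Real.exp (-Real.sqrt (-k) * t) ≤ f t := by
  have hle : ∀ t, 0 ≤ t → f'' t ≤ √(-k) ^ 2 * f t := fun t ht =>
    (hineq t ht).trans <| mul_le_mul_of_nonneg_right
      (sq_sqrt' (x := -k) ▸ le_max_left _ _) (hpos t ht).le
  intro t ht
  simpa [hf0] using mul_exp_neg_le_of_second_deriv_le (sqrt_nonneg _) hd1 hd2 hle hpos t ht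

/-- If `k ≤ 0` and `f : [0,∞) → ℝ` is twice differentiable with `f'' ≤ -k f`,
`f 0 = 1` and `f > 0`, then `f t ≥ exp(-√(-k) t)` for all `t ≥ 0`
(for `k = 0` this says `f t ≥ 1`). -/
theorem stmt_0 (k : ℝ) (hk : k ≤ 0) (f f' f'' : ℝ → ℝ)
    (hd1 : ∀ t, 0 ≤ t → HasDerivAt f (f' t) t)
    (hd2 : ∀ t, 0 ≤ t → HasDerivAt f' (f'' t) t)
    (hineq : ∀ t, 0 ≤ t → f'' t ≤ -k * f t)
    (hf0 : f 0 = 1)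
    (hpos : ∀ t, 0 ≤ t → 0 < f t) :
    ∀ t, 0 ≤ t → Real.exp (-Real.sqrt (-k) * t) ≤ f t :=
  stmt_0_general k f f' f'' hd1 hd2 hineq hf0 hpos
end

section
/- Let k ∈ ℝ, λ satisfy λ > 0 if k = 0, λ arbitrary if k > 0, and λ > √(-k) if k < 0, and let l = l_k(λ) where l_k(λ) = 1/λ if k = 0, l_k(λ) = (1/√k)·arccot(λ/√k) if k > 0, and l_k(λ) = (1/√(-k))·arcoth(λ/√(-k)) if k < 0. Suppose f, f̄ : [0, l] → ℝ satisfy: f'' ≤ -k f on [0, l], f(0) = 1, f(l) ≥ 0; and f̄'' = -k f̄ on [0, l], f̄(0) = 1, f̄(l) = 0. Then f(t) ≥ f̄(t) for all t ∈ [0, l]. -/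
open Real

/-- Generalized cosine `c_k`. -/
noncomputable def ck (k t : ℝ) : ℝ :=
  if k = 0 then 1
  else if 0 < k then Real.cos (Real.sqrt k * t)
  else Real.cosh (Real.sqrt (-k) * t)

/-- Generalized sine `s_k`. -/
noncomputable def sk (k t : ℝ) : ℝ :=
  if k = 0 then t
  else if 0 < k then Real.sin (Real.sqrt k * t) / Real.sqrt k
  else Real.sinh (Real.sqrt (-k) * t) / Real.sqrt (-k)

/-- The radius `l_k(λ)` of the sphere in the space form of curvature `k` with
principal curvature `λ`: `1/λ` if `k = 0`, `(1/√k)·arccot(λ/√k)` if `k > 0`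
(with `arccot x = π/2 - arctan x`), and `(1/√(-k))·arcoth(λ/√(-k))` if `k < 0`
(with `arcoth y = (1/2)·log((y+1)/(y-1))`). -/
noncomputable def lk (k lam : ℝ) : ℝ :=
  if k = 0 then 1 / lam
  else if 0 < k then (Real.pi / 2 - Real.arctan (lam / Real.sqrt k)) / Real.sqrt k
  else (Real.log ((lam / Real.sqrt (-k) + 1) / (lam / Real.sqrt (-k) - 1)) / 2) / Real.sqrt (-k)

/-- `σ_{k,λ}`, the solution of `σ'' + kσ = 0`, `σ(0)=1`, `σ'(0) = -λ`. -/
noncomputable def sigmaK (k lam t : ℝ) : ℝ := ck k t - lam * sk k t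

open Set

/-!
Compare `f` with `σ = σ_{k,λ}` through the Wronskian `W = σ f' - f σ'`, whose derivative
`σ (f'' + k f)` is `≤ 0` while `σ ≥ 0`. Since `σ > 0` on `[0, l)` and `σ(l) = 0`, we get
`σ'(l) ≤ 0`, so `W(l) = -f(l) σ'(l) ≥ 0` and hence `W ≥ 0` on `[0, l]`. Then
`(f / σ)' = W / σ² ≥ 0` on `[0, l)`, so `f / σ ≥ f(0) / σ(0) = 1` there.
-/

section SturmComparison

variable {a b : ℝ} {k u u' f f' f'' : ℝ → ℝ}

theorem HasDerivAt.nonpos_of_eq_zero_of_pos {d : ℝ} (hu : HasDerivAt u d b) (hab : a < b)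
    (hpos : ∀ t ∈ Ioo a b, 0 < u t) (hb : u b = 0) : d ≤ 0 := by
  refine le_of_tendsto (hu.tendsto_slope.mono_left (nhdsLT_le_nhdsNE b)) ?_
  filter_upwards [Ioo_mem_nhdsLT hab] with t ht
  rw [slope_def_field, hb, sub_zero]
  exact div_nonpos_of_nonneg_of_nonpos (hpos t ht).le (sub_nonpos.2 ht.2.le)

theorem antitoneOn_wronskian
    (hu : ∀ t ∈ Icc a b, HasDerivAt u (u' t) t)
    (hu' : ∀ t ∈ Icc a b, HasDerivAt u' (-k t * u t) t)
    (hf : ∀ t ∈ Icc a b, HasDerivAt f (f' t) t)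
    (hf' : ∀ t ∈ Icc a b, HasDerivAt f' (f'' t) t)
    (hineq : ∀ t ∈ Icc a b, f'' t ≤ -k t * f t) (hu_nonneg : ∀ t ∈ Icc a b, 0 ≤ u t) :
    AntitoneOn (fun t => u t * f' t - f t * u' t) (Icc a b) := by
  have hW : ∀ t ∈ Icc a b,
      HasDerivAt (fun t => u t * f' t - f t * u' t) (u t * (f'' t + k t * f t)) t := by
    intro t ht
    exact ((hu t ht).mul (hf' t ht)).sub ((hf t ht).mul (hu' t ht)) |>.congr_deriv (by ring)
  refine antitoneOn_of_hasDerivWithinAt_nonpos (convex_Icc a b)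
    (fun t ht => (hW t ht).continuousAt.continuousWithinAt)
    (fun t ht => (hW t (interior_subset ht)).hasDerivWithinAt) fun t ht => ?_
  have ht := interior_subset ht
  exact mul_nonpos_of_nonneg_of_nonpos (hu_nonneg t ht) (by linarith [hineq t ht])

theorem monotoneOn_div_of_wronskian_nonneg
    (hu : ∀ t ∈ Icc a b, HasDerivAt u (u' t) t) (hf : ∀ t ∈ Icc a b, HasDerivAt f (f' t) t)
    (hu_pos : ∀ t ∈ Icc a b, 0 < u t) (hW : ∀ t ∈ Icc a b, 0 ≤ u t * f' t - f t * u' t) :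
    MonotoneOn (fun t => f t / u t) (Icc a b) := by
  have hq : ∀ t ∈ Icc a b,
      HasDerivAt (fun t => f t / u t) ((u t * f' t - f t * u' t) / u t ^ 2) t := by
    intro t ht
    exact (hf t ht).div (hu t ht) (hu_pos t ht).ne' |>.congr_deriv (by ring)
  refine monotoneOn_of_hasDerivWithinAt_nonneg (convex_Icc a b)
    (fun t ht => (hq t ht).continuousAt.continuousWithinAt)
    (fun t ht => (hq t (interior_subset ht)).hasDerivWithinAt) fun t ht => ?_
  exact div_nonneg (hW t (interior_subset ht)) (sq_nonneg _)

theorem sturm_comparison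
    (hu : ∀ t ∈ Icc a b, HasDerivAt u (u' t) t)
    (hu' : ∀ t ∈ Icc a b, HasDerivAt u' (-k t * u t) t)
    (hf : ∀ t ∈ Icc a b, HasDerivAt f (f' t) t)
    (hf' : ∀ t ∈ Icc a b, HasDerivAt f' (f'' t) t)
    (hineq : ∀ t ∈ Icc a b, f'' t ≤ -k t * f t)
    (hu_pos : ∀ t ∈ Ico a b, 0 < u t) (hub : u b = 0) (ha : u a ≤ f a) (hfb : 0 ≤ f b) :
    ∀ t ∈ Icc a b, u t ≤ f t := by
  intro t ht
  rcases ht.2.eq_or_lt with rfl | htb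
  · rwa [hub]
  have hab : a < b := ht.1.trans_lt htb
  have hu_nonneg : ∀ s ∈ Icc a b, 0 ≤ u s := fun s hs =>
    hs.2.eq_or_lt.elim (fun h => h ▸ hub.ge) fun h => (hu_pos s ⟨hs.1, h⟩).le
  have hu'b : u' b ≤ 0 :=
    (hu b (right_mem_Icc.2 hab.le)).nonpos_of_eq_zero_of_pos hab
      (fun s hs => hu_pos s (Ioo_subset_Ico_self hs)) hub
  have hWb : 0 ≤ u b * f' b - f b * u' b := by
    rw [hub, zero_mul, zero_sub, neg_nonneg]
    exact mul_nonpos_of_nonneg_of_nonpos hfb hu'b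
  have hW : ∀ s ∈ Icc a b, 0 ≤ u s * f' s - f s * u' s := fun s hs =>
    hWb.trans (antitoneOn_wronskian hu hu' hf hf' hineq hu_nonneg hs (right_mem_Icc.2 hab.le) hs.2)
  have hsub : Icc a t ⊆ Icc a b := Icc_subset_Icc_right ht.2
  have hpos : ∀ s ∈ Icc a t, 0 < u s := fun s hs => hu_pos s ⟨hs.1, hs.2.trans_lt htb⟩
  have hmono := monotoneOn_div_of_wronskian_nonneg (fun s hs => hu s (hsub hs))
    (fun s hs => hf s (hsub hs)) hpos (fun s hs => hW s (hsub hs))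
    (left_mem_Icc.2 ht.1) (right_mem_Icc.2 ht.1) ht.1
  have hstart : 1 ≤ f a / u a := (one_le_div (hpos a (left_mem_Icc.2 ht.1))).2 ha
  exact (one_le_div (hpos t (right_mem_Icc.2 ht.1))).1 (hstart.trans hmono)

end SturmComparison

theorem ck_of_pos {k : ℝ} (hk : 0 < k) : ck k = fun t => cos (√k * t) := by
  ext t; simp [ck, hk.ne', hk]

theorem sk_of_pos {k : ℝ} (hk : 0 < k) : sk k = fun t => sin (√k * t) / √k := by
  ext t; simp [sk, hk.ne', hk]

theorem ck_of_neg {k : ℝ} (hk : k < 0) : ck k = fun t => cosh (√(-k) * t) := by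
  ext t; simp [ck, hk.ne, hk.not_gt]

theorem sk_of_neg {k : ℝ} (hk : k < 0) : sk k = fun t => sinh (√(-k) * t) / √(-k) := by
  ext t; simp [sk, hk.ne, hk.not_gt]

theorem hasDerivAt_ck (k t : ℝ) : HasDerivAt (ck k) (-k * sk k t) t := by
  have hlin (c : ℝ) : HasDerivAt (c * ·) c t := by simpa using (hasDerivAt_id t).const_mul c
  rcases lt_trichotomy k 0 with hk | rfl | hk
  · have hs0 : 0 < √(-k) := sqrt_pos.2 (by linarith)
    have hs : √(-k) ^ 2 = -k := sq_sqrt (by linarith)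
    rw [ck_of_neg hk, sk_of_neg hk]
    exact (hlin _).cosh.congr_deriv (by field_simp; linear_combination sinh (√(-k) * t) * hs)
  · rw [show ck 0 = fun _ => 1 from funext fun _ => by simp [ck]]
    simpa [sk] using hasDerivAt_const t (1 : ℝ)
  · have hs : √k ^ 2 = k := sq_sqrt hk.le
    rw [ck_of_pos hk, sk_of_pos hk]
    exact (hlin _).cos.congr_deriv (by field_simp; linear_combination -sin (√k * t) * hs)

theorem hasDerivAt_sk (k t : ℝ) : HasDerivAt (sk k) (ck k t) t := by
  have hlin (c : ℝ) : HasDerivAt (c * ·) c t := by simpa using (hasDerivAt_id t).const_mul c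
  rcases lt_trichotomy k 0 with hk | rfl | hk
  · have hs : 0 < √(-k) := sqrt_pos.2 (by linarith)
    rw [ck_of_neg hk, sk_of_neg hk]
    exact ((hlin _).sinh.div_const _).congr_deriv (by field_simp)
  · rw [show sk 0 = id from funext fun _ => by simp [sk]]
    simpa [ck] using hasDerivAt_id t
  · have hs : 0 < √k := sqrt_pos.2 hk
    rw [ck_of_pos hk, sk_of_pos hk]
    exact ((hlin _).sin.div_const _).congr_deriv (by field_simp)

theorem hasDerivAt_sigmaK (k lam t : ℝ) :
    HasDerivAt (sigmaK k lam) (-k * sk k t - lam * ck k t) t :=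
  (hasDerivAt_ck k t).sub ((hasDerivAt_sk k t).const_mul lam)

theorem hasDerivAt_deriv_sigmaK (k lam t : ℝ) :
    HasDerivAt (fun t => -k * sk k t - lam * ck k t) (-k * sigmaK k lam t) t :=
  ((hasDerivAt_sk k t).const_mul (-k)).sub ((hasDerivAt_ck k t).const_mul lam)
    |>.congr_deriv (by simp only [sigmaK]; ring)

theorem sigmaK_zero (k lam : ℝ) : sigmaK k lam 0 = 1 := by
  simp [sigmaK, ck, sk]

theorem sigmaK_zero_left {lam : ℝ} (hlam : lam ≠ 0) (t : ℝ) :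
    sigmaK 0 lam t = lam * (lk 0 lam - t) := by
  simp only [sigmaK, ck, sk, lk, if_true]
  field_simp

theorem sqrt_mul_lk_of_pos {k : ℝ} (hk : 0 < k) (lam : ℝ) :
    √k * lk k lam = π / 2 - arctan (lam / √k) := by
  have hs : 0 < √k := sqrt_pos.2 hk
  simp only [lk, hk.ne', hk, if_false, if_true]
  field_simp

theorem sigmaK_mul_cos_arctan {k : ℝ} (hk : 0 < k) (lam t : ℝ) :
    sigmaK k lam t * cos (arctan (lam / √k)) = sin (√k * (lk k lam - t)) := by
  have hs : 0 < √k := sqrt_pos.2 hk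
  have hsin : sin (arctan (lam / √k)) = lam / √k * cos (arctan (lam / √k)) := by
    rw [sin_arctan, cos_arctan]; ring
  rw [mul_sub, sqrt_mul_lk_of_pos hk, sub_sub, sin_pi_div_two_sub, cos_add, hsin]
  simp only [sigmaK, ck_of_pos hk, sk_of_pos hk]
  field_simp

theorem sigmaK_mul_exp {k lam : ℝ} (hk : k < 0) (hlam : √(-k) < lam) (t : ℝ) :
    sigmaK k lam t * (2 * exp (√(-k) * t)) =
      (lam / √(-k) - 1) * (exp (√(-k) * lk k lam) ^ 2 - exp (√(-k) * t) ^ 2) := by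
  have hs : 0 < √(-k) := sqrt_pos.2 (by linarith)
  have hc : 0 < lam / √(-k) - 1 := by rw [sub_pos, one_lt_div hs]; exact hlam
  have hl : exp (√(-k) * lk k lam) ^ 2 = (lam / √(-k) + 1) / (lam / √(-k) - 1) := by
    simp only [lk, hk.ne, hk.not_gt, if_false]
    rw [← exp_nat_mul, mul_div_cancel₀ _ hs.ne', Nat.cast_ofNat,
      mul_div_cancel₀ _ two_ne_zero, exp_log (div_pos (by linarith) hc)]
  have hlam' : lam - √(-k) ≠ 0 := (sub_pos.2 hlam).ne'
  simp only [hl, sigmaK, ck_of_neg hk, sk_of_neg hk, cosh_eq, sinh_eq, exp_neg]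
  field_simp
  ring

section Admissible

variable {k lam : ℝ} (hlam0 : k = 0 → 0 < lam) (hlamneg : k < 0 → √(-k) < lam)
include hlam0 hlamneg

theorem sigmaK_lk : sigmaK k lam (lk k lam) = 0 := by
  rcases lt_trichotomy k 0 with hk | rfl | hk
  · have h := sigmaK_mul_exp hk (hlamneg hk) (lk k lam)
    rw [sub_self, mul_zero] at h
    exact (mul_eq_zero.1 h).resolve_right (by positivity)
  · rw [sigmaK_zero_left (hlam0 rfl).ne', sub_self, mul_zero]
  · have h := sigmaK_mul_cos_arctan hk lam (lk k lam)
    rw [sub_self, mul_zero, sin_zero] at h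
    exact (mul_eq_zero.1 h).resolve_right (cos_arctan_pos _).ne'

theorem sigmaK_pos {t : ℝ} (ht : t ∈ Ico 0 (lk k lam)) : 0 < sigmaK k lam t := by
  rcases lt_trichotomy k 0 with hk | rfl | hk
  · have hs : 0 < √(-k) := sqrt_pos.2 (by linarith)
    have hc : 0 < lam / √(-k) - 1 := by rw [sub_pos, one_lt_div hs]; exact hlamneg hk
    have hexp : exp (√(-k) * t) ^ 2 < exp (√(-k) * lk k lam) ^ 2 := by
      gcongr; exact ht.2
    refine pos_of_mul_pos_left (b := 2 * exp (√(-k) * t)) ?_ (by positivity)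
    rw [sigmaK_mul_exp hk (hlamneg hk)]
    exact mul_pos hc (sub_pos.2 hexp)
  · rw [sigmaK_zero_left (hlam0 rfl).ne']
    exact mul_pos (hlam0 rfl) (sub_pos.2 ht.2)
  · have hs : 0 < √k := sqrt_pos.2 hk
    refine pos_of_mul_pos_left (b := cos (arctan (lam / √k))) ?_ (cos_arctan_pos _).le
    rw [sigmaK_mul_cos_arctan hk]
    apply sin_pos_of_pos_of_lt_pi (mul_pos hs (sub_pos.2 ht.2))
    rw [mul_sub, sqrt_mul_lk_of_pos hk]
    linarith [neg_pi_div_two_lt_arctan (lam / √k), mul_nonneg hs.le ht.1]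

end Admissible

/-- Proposition 1(1): a function satisfying `f'' ≤ -k f`, `f(0) = 1`, `f(l) ≥ 0`
on `[0, l]`, where `l = l_k(λ)`, dominates the model solution `f̄ = σ_{k,λ}`
(which satisfies `f̄'' = -k f̄`, `f̄(0) = 1`, `f̄(l) = 0`). -/
theorem stmt_1 (k lam : ℝ)
    (hlam0 : k = 0 → 0 < lam) (hlamneg : k < 0 → Real.sqrt (-k) < lam)
    (l : ℝ) (hl : l = lk k lam)
    (f f' f'' : ℝ → ℝ)
    (hd1 : ∀ t ∈ Set.Icc 0 l, HasDerivAt f (f' t) t)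
    (hd2 : ∀ t ∈ Set.Icc 0 l, HasDerivAt f' (f'' t) t)
    (hineq : ∀ t ∈ Set.Icc 0 l, f'' t ≤ -k * f t)
    (hf0 : f 0 = 1) (hfl : 0 ≤ f l) :
    ∀ t ∈ Set.Icc 0 l, sigmaK k lam t ≤ f t := by
  subst hl
  exact sturm_comparison (k := fun _ => k) (fun t _ => hasDerivAt_sigmaK k lam t)
    (fun t _ => hasDerivAt_deriv_sigmaK k lam t) hd1 hd2 hineq
    (fun _ ht => sigmaK_pos hlam0 hlamneg ht) (sigmaK_lk hlam0 hlamneg)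
    (by rw [sigmaK_zero, hf0]) hfl
end

section
/- Let f, g : (0, ∞) → ℝ be continuous functions with g positive, such that f(t)/g(t) is decreasing for t > 0. Then the function t ↦ (∫₀ᵗ f(s) ds) / (∫₀ᵗ g(s) ds) is decreasing for t > 0. -/
open intervalIntegral MeasureTheory Set

/-! With `r = f a / g a`, monotonicity of `f / g` gives `f ≥ r g` on `(0, a)` and `f ≤ r g` on
`(a, b)`. Integrating, `∫₀ᵃ f ≥ r ∫₀ᵃ g` and `∫ₐᵇ f ≤ r ∫ₐᵇ g`, and the mediant inequality
`(F + K) / (G + H) ≤ F / G` then compares the ratios at `b` and at `a`. -/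

theorem add_div_add_le_div {F G K H r : ℝ} (hG : 0 < G) (hH : 0 ≤ H)
    (hF : r * G ≤ F) (hK : K ≤ r * H) : (F + K) / (G + H) ≤ F / G := by
  rw [div_le_div_iff₀ (by linarith) hG]
  nlinarith [mul_le_mul_of_nonneg_right hK hG.le, mul_le_mul_of_nonneg_right hF hH]

theorem antitoneOn_integral_div_integral {f g : ℝ → ℝ} {c : ℝ}
    (hf : ∀ t > c, IntervalIntegrable f volume c t) (hg : ∀ t > c, IntervalIntegrable g volume c t)
    (hgpos : ∀ t > c, 0 < g t) (hdec : AntitoneOn (fun t => f t / g t) (Ioi c)) :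
    AntitoneOn (fun t => (∫ s in c..t, f s) / (∫ s in c..t, g s)) (Ioi c) := by
  intro a (ha : c < a) b (hb : c < b) hab
  set r := f a / g a
  have hfab : IntervalIntegrable f volume a b := (hf a ha).symm.trans (hf b hb)
  have hgab : IntervalIntegrable g volume a b := (hg a ha).symm.trans (hg b hb)
  have hGa : 0 < ∫ s in c..a, g s :=
    intervalIntegral_pos_of_pos_on (hg a ha) (fun s hs => hgpos s hs.1) ha
  have hHab : 0 ≤ ∫ s in a..b, g s :=
    integral_nonneg hab fun s hs => (hgpos s (ha.trans_le hs.1)).le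
  have hlower : r * ∫ s in c..a, g s ≤ ∫ s in c..a, f s := by
    rw [← intervalIntegral.integral_const_mul]
    refine integral_mono_on_of_le_Ioo ha.le ((hg a ha).const_mul r) (hf a ha) fun s hs => ?_
    exact (le_div_iff₀ (hgpos s hs.1)).mp (hdec hs.1 ha hs.2.le)
  have hupper : ∫ s in a..b, f s ≤ r * ∫ s in a..b, g s := by
    rw [← intervalIntegral.integral_const_mul]
    refine integral_mono_on hab hfab (hgab.const_mul r) fun s hs => ?_
    have hs₀ : c < s := ha.trans_le hs.1
    exact (div_le_iff₀ (hgpos s hs₀)).mp (hdec ha hs₀ hs.1)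
  dsimp only
  rw [← integral_add_adjacent_intervals (hf a ha) hfab,
    ← integral_add_adjacent_intervals (hg a ha) hgab]
  exact add_div_add_le_div hGa hHab hlower hupper

/-- If `f, g` are continuous on `[0,∞)`, `g > 0` on `(0,∞)` and `f/g` is
decreasing on `(0,∞)`, then `t ↦ (∫₀ᵗ f)/(∫₀ᵗ g)` is decreasing on `(0,∞)`. -/
theorem stmt_2 (f g : ℝ → ℝ)
    (hf : ContinuousOn f (Set.Ici 0)) (hg : ContinuousOn g (Set.Ici 0))
    (hgpos : ∀ t > 0, 0 < g t)
    (hdec : AntitoneOn (fun t => f t / g t) (Set.Ioi 0)) :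
    AntitoneOn (fun t => (∫ s in (0:ℝ)..t, f s) / (∫ s in (0:ℝ)..t, g s)) (Set.Ioi 0) := by
  have hIcc : ∀ t > (0 : ℝ), uIcc 0 t ⊆ Ici 0 := fun t ht => by
    rw [uIcc_of_le ht.le]
    exact Icc_subset_Ici_self
  exact antitoneOn_integral_div_integral (fun t ht => (hf.mono (hIcc t ht)).intervalIntegrable)
    (fun t ht => (hg.mono (hIcc t ht)).intervalIntegrable) hgpos hdec
end

section
/- Let g : (0, ∞) → ℝ be smooth with g(t) > 0 for t > 0, g extending continuously to 0 with g(0) = 0, and 1/g strictly convex on (0, ∞). Set u = log g, h(t) = (∫₀ᵗ g(r) dr)/g(t), and assume lim_{t↓0} u'(t)g(t)/(u'(t)² - u''(t)) = 0. If 2(u'')² - u'·u''' > 0 on (0, ∞), then h is strictly convex on (0, ∞); if 2(u'')² - u'·u''' < 0 on (0, ∞), then h is strictly concave on (0, ∞). -/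
open Real Filter Set
open scoped ContDiff Topology

lemma aux_nonneg_of_monotoneOn {φ : ℝ → ℝ} {c t : ℝ} (ht : 0 < t)
    (hm : MonotoneOn φ (Set.Ioi 0)) (hd : HasDerivAt φ c t) : 0 ≤ c := by
  have h1 : Tendsto (slope φ t) (𝓝[>] t) (𝓝 c) := by
    have h2 := (hd.hasDerivWithinAt (s := Set.Ioi t))
    rw [hasDerivWithinAt_iff_tendsto_slope] at h2
    simpa [Set.diff_singleton_eq_self (Set.notMem_Ioi_self)] using h2
  refine ge_of_tendsto h1 ?_
  filter_upwards [self_mem_nhdsWithin] with y hy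
  have hty : t < y := hy
  have h3 : φ t ≤ φ y := hm (Set.mem_Ioi.2 ht) (Set.mem_Ioi.2 (ht.trans hty)) hty.le
  rw [slope_def_field]
  have := sub_pos.mpr hty
  exact div_nonneg (by linarith) (by linarith)

/-- Lemma on convexity/concavity of `h(t) = (∫₀ᵗ g)/g(t)`: with `u = log g`,
if `2(u'')² − u'u''' > 0` then `h` is strictly convex; if `< 0` then `h` is
strictly concave; assuming `g > 0` smooth, `g(0⁺) = 0`, `1/g` strictly convex,
and `u'·g/(u'² − u'') → 0` as `t ↓ 0`. -/
theorem stmt_4 (g : ℝ → ℝ)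
    (hsmooth : ContDiffOn ℝ (⊤ : ℕ∞) g (Set.Ioi 0))
    (hgpos : ∀ t > 0, 0 < g t)
    (hg0 : Filter.Tendsto g (nhdsWithin 0 (Set.Ioi 0)) (nhds 0))
    (hinvconv : StrictConvexOn ℝ (Set.Ioi 0) (fun t => 1 / g t))
    (u : ℝ → ℝ) (hu : ∀ t, u t = Real.log (g t))
    (h : ℝ → ℝ) (hh : ∀ t, h t = (∫ r in (0:ℝ)..t, g r) / g t)
    (hlim : Filter.Tendsto
      (fun t => deriv u t * g t / ((deriv u t) ^ 2 - deriv (deriv u) t))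
      (nhdsWithin 0 (Set.Ioi 0)) (nhds 0)) :
    ((∀ t > 0, 0 < 2 * (deriv (deriv u) t) ^ 2 - deriv u t * deriv (deriv (deriv u)) t) →
      StrictConvexOn ℝ (Set.Ioi 0) h) ∧
    ((∀ t > 0, 2 * (deriv (deriv u) t) ^ 2 - deriv u t * deriv (deriv (deriv u)) t < 0) →
      StrictConcaveOn ℝ (Set.Ioi 0) h) := by
  set u1 := deriv u with hu1d
  set u2 := deriv u1 with hu2d
  set u3 := deriv u2 with hu3d
  have hSo : IsOpen (Set.Ioi (0:ℝ)) := isOpen_Ioi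
  have hg_cd : ContDiffOn ℝ ∞ g (Set.Ioi 0) := hsmooth.of_le (by simp)
  have hgeq : ∀ t ∈ Set.Ioi (0:ℝ), g t = Real.exp (u t) := fun t ht => by
    rw [hu t, Real.exp_log (hgpos t ht)]
  have hu_cd : ContDiffOn ℝ ∞ u (Set.Ioi 0) := by
    have huset : u = fun t => Real.log (g t) := funext hu
    rw [huset]
    exact hg_cd.log (fun t ht => (hgpos t ht).ne')
  have hu1_cd : ContDiffOn ℝ ∞ u1 (Set.Ioi 0) := hu_cd.deriv_of_isOpen hSo (by simp)
  have hu2_cd : ContDiffOn ℝ ∞ u2 (Set.Ioi 0) := hu1_cd.deriv_of_isOpen hSo (by simp)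
  have hdiffAt : ∀ (f : ℝ → ℝ), ContDiffOn ℝ ∞ f (Set.Ioi 0) → ∀ t ∈ Set.Ioi (0:ℝ),
      DifferentiableAt ℝ f t := fun f hf t ht =>
    (hf.differentiableOn (by simp)).differentiableAt (hSo.mem_nhds ht)
  have hmemnhds : ∀ t ∈ Set.Ioi (0:ℝ), Set.Ioi (0:ℝ) ∈ 𝓝 t := fun t ht => hSo.mem_nhds ht
  have huAt : ∀ t ∈ Set.Ioi (0:ℝ), HasDerivAt u (u1 t) t := fun t ht =>
    (hdiffAt u hu_cd t ht).hasDerivAt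
  have hu1At : ∀ t ∈ Set.Ioi (0:ℝ), HasDerivAt u1 (u2 t) t := fun t ht =>
    (hdiffAt u1 hu1_cd t ht).hasDerivAt
  have hu2At : ∀ t ∈ Set.Ioi (0:ℝ), HasDerivAt u2 (u3 t) t := fun t ht =>
    (hdiffAt u2 hu2_cd t ht).hasDerivAt
  have hgAt : ∀ t ∈ Set.Ioi (0:ℝ), HasDerivAt g (u1 t * g t) t := by
    intro t ht
    have h1 : HasDerivAt (fun s => Real.exp (u s)) (Real.exp (u t) * u1 t) t := (huAt t ht).exp
    have h2 : g =ᶠ[𝓝 t] fun s => Real.exp (u s) :=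
      Filter.eventuallyEq_of_mem (hmemnhds t ht) hgeq
    have h3 := h1.congr_of_eventuallyEq h2
    rw [← hgeq t ht, mul_comm] at h3
    exact h3
  have hwAt : ∀ t ∈ Set.Ioi (0:ℝ),
      HasDerivAt (fun s => u1 s ^ 2 - u2 s) (2 * u1 t * u2 t - u3 t) t := by
    intro t ht
    have h1 := ((hu1At t ht).fun_pow 2).fun_sub (hu2At t ht)
    refine h1.congr_deriv ?_
    push_cast
    ring
  -- w nonneg from convexity of 1/g
  have hfAt : ∀ t ∈ Set.Ioi (0:ℝ),
      HasDerivAt (fun s => 1 / g s) (-u1 t * Real.exp (-u t)) t := by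
    intro t ht
    have h1 : HasDerivAt (fun s => Real.exp (-u s)) (Real.exp (-u t) * -u1 t) t :=
      ((huAt t ht).neg).exp
    rw [mul_comm] at h1
    have h2 : (fun s => 1 / g s) =ᶠ[𝓝 t] fun s => Real.exp (-u s) := by
      filter_upwards [hmemnhds t ht] with s hs
      rw [hgeq s hs, Real.exp_neg, one_div]
    exact h1.congr_of_eventuallyEq h2
  have hmono : MonotoneOn (deriv fun s => 1 / g s) (Set.Ioi 0) :=
    hinvconv.convexOn.monotoneOn_deriv (fun x hx => (hfAt x hx).differentiableAt)
  have hF1mono : MonotoneOn (fun s => -u1 s * Real.exp (-u s)) (Set.Ioi 0) := by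
    intro a ha b hb hab
    have ha' := (hfAt a ha).deriv
    have hb' := (hfAt b hb).deriv
    simp only
    rw [← ha', ← hb']
    exact hmono ha hb hab
  have hwge : ∀ t ∈ Set.Ioi (0:ℝ), 0 ≤ u1 t ^ 2 - u2 t := by
    intro t ht
    have hF1At : HasDerivAt (fun s => -u1 s * Real.exp (-u s))
        ((u1 t ^ 2 - u2 t) * Real.exp (-u t)) t := by
      have h1 := ((hu1At t ht).fun_neg).fun_mul (((huAt t ht).fun_neg).exp)
      refine h1.congr_deriv ?_
      ring
    have h0 := aux_nonneg_of_monotoneOn ht hF1mono hF1At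
    have he := Real.exp_pos (-u t)
    nlinarith
  -- w positive given nonvanishing of Q
  have hwpos : (∀ t > 0, 2 * u2 t ^ 2 - u1 t * u3 t ≠ 0) →
      ∀ t ∈ Set.Ioi (0:ℝ), 0 < u1 t ^ 2 - u2 t := by
    intro hQ t ht
    rcases lt_or_eq_of_le (hwge t ht) with hlt | heq0
    · exact hlt
    exfalso
    have hlocmin : IsLocalMin (fun s => u1 s ^ 2 - u2 s) t := by
      filter_upwards [hmemnhds t ht] with y hy
      show u1 t ^ 2 - u2 t ≤ u1 y ^ 2 - u2 y
      rw [← heq0]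
      exact hwge y hy
    have hdw := hlocmin.deriv_eq_zero
    rw [(hwAt t ht).deriv] at hdw
    have h2 : u2 t = u1 t ^ 2 := by nlinarith [heq0]
    have h3 : u3 t = 2 * u1 t * u2 t := by linarith
    apply hQ t ht
    rw [h3, h2]
    ring
  -- continuity and integrability of g
  have hgcont : ∀ t ∈ Set.Ioi (0:ℝ), ContinuousAt g t := fun t ht =>
    (hdiffAt g hg_cd t ht).continuousAt
  obtain ⟨δ, hδpos, hδ⟩ := Metric.tendsto_nhdsWithin_nhds.mp hg0 1 one_pos
  have hbnd : ∀ s : ℝ, 0 < s → s < δ → ‖g s‖ ≤ 1 := by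
    intro s hs hsδ
    have h1 := hδ (Set.mem_Ioi.2 hs) (by rw [Real.dist_eq, sub_zero, abs_of_pos hs]; exact hsδ)
    rw [Real.dist_eq, sub_zero] at h1
    rw [Real.norm_eq_abs]
    exact h1.le
  have hInt : ∀ t ∈ Set.Ioi (0:ℝ), IntervalIntegrable g MeasureTheory.volume 0 t := by
    intro t ht
    have ht' : (0:ℝ) < t := ht
    rw [intervalIntegrable_iff_integrableOn_Ioc_of_le ht'.le]
    set m := min t (δ / 2) with hm
    have hm0 : 0 < m := lt_min ht' (by linarith)
    have hmδ : m < δ := lt_of_le_of_lt (min_le_right _ _) (by linarith)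
    have hA : MeasureTheory.IntegrableOn g (Set.Ioc 0 m) := by
      refine ⟨ContinuousOn.aestronglyMeasurable
        (fun s hs => (hgcont s hs.1).continuousWithinAt) measurableSet_Ioc,
        MeasureTheory.HasFiniteIntegral.restrict_of_bounded (C := 1) measure_Ioc_lt_top ?_⟩
      refine (MeasureTheory.ae_restrict_iff' measurableSet_Ioc).2 (Filter.Eventually.of_forall ?_)
      intro s hs
      exact hbnd s hs.1 (lt_of_le_of_lt hs.2 hmδ)
    have hB : MeasureTheory.IntegrableOn g (Set.Ioc m t) := by
      have hcont : ContinuousOn g (Set.Icc m t) := fun s hs =>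
        (hgcont s (lt_of_lt_of_le hm0 hs.1)).continuousWithinAt
      exact hcont.integrableOn_Icc.mono_set Set.Ioc_subset_Icc_self
    refine (hA.union hB).mono_set ?_
    intro x hx
    rcases le_or_gt x m with hc | hc
    · exact Or.inl ⟨hx.1, hc⟩
    · exact Or.inr ⟨hc, hx.2⟩
  have hIlim : Tendsto (fun t => ∫ r in (0:ℝ)..t, g r) (𝓝[>] (0:ℝ)) (𝓝 0) := by
    apply squeeze_zero_norm' (a := fun t : ℝ => |t|)
    · filter_upwards [Ioo_mem_nhdsGT_of_mem (Set.left_mem_Ico.2 hδpos)] with t htm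
      have h1 : ‖∫ r in (0:ℝ)..t, g r‖ ≤ 1 * |t - 0| := by
        apply intervalIntegral.norm_integral_le_of_norm_le_const
        intro x hx
        rw [Set.uIoc_of_le htm.1.le] at hx
        exact hbnd x hx.1 (lt_of_le_of_lt hx.2 htm.2)
      simpa using h1
    · exact (continuous_abs.tendsto' 0 0 abs_zero).mono_left nhdsWithin_le_nhds
  have hsm := ContinuousAt.stronglyMeasurableAtFilter (μ := MeasureTheory.volume) hSo hgcont
  have hIAt : ∀ t ∈ Set.Ioi (0:ℝ), HasDerivAt (fun s => ∫ r in (0:ℝ)..s, g r) (g t) t :=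
    fun t ht =>
    intervalIntegral.integral_hasDerivAt_right (hInt t ht) (hsm t ht) (hgcont t ht)
  -- derivatives of h
  have hheq : h = fun t => (∫ r in (0:ℝ)..t, g r) / g t := funext hh
  have hhAt : ∀ t ∈ Set.Ioi (0:ℝ), HasDerivAt h (1 - u1 t * h t) t := by
    intro t ht
    have hgne := (hgpos t ht).ne'
    have h2 : HasDerivAt (fun s => (∫ r in (0:ℝ)..s, g r) / g s)
        ((g t * g t - (∫ r in (0:ℝ)..t, g r) * (u1 t * g t)) / g t ^ 2) t :=
      (hIAt t ht).div (hgAt t ht) hgne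
    have h3 : (g t * g t - (∫ r in (0:ℝ)..t, g r) * (u1 t * g t)) / g t ^ 2
        = 1 - u1 t * h t := by
      rw [hh t]; field_simp
    rw [← hheq] at h2
    rw [h3] at h2
    exact h2
  have hh2 : ∀ t ∈ Set.Ioi (0:ℝ),
      deriv (deriv h) t = (u1 t ^ 2 - u2 t) * h t - u1 t := by
    intro t ht
    have he : deriv h =ᶠ[𝓝 t] fun s => 1 - u1 s * h s := by
      filter_upwards [hmemnhds t ht] with s hs
      exact (hhAt s hs).deriv
    rw [he.deriv_eq]
    have h1 : HasDerivAt (fun s => 1 - u1 s * h s)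
        (0 - (u2 t * h t + u1 t * (1 - u1 t * h t))) t :=
      (hasDerivAt_const t 1).sub ((hu1At t ht).mul (hhAt t ht))
    rw [h1.deriv]; ring
  -- derivative of D
  have hDAt : ∀ t ∈ Set.Ioi (0:ℝ), 0 < u1 t ^ 2 - u2 t →
      HasDerivAt (fun s => (∫ r in (0:ℝ)..s, g r) - u1 s * g s / (u1 s ^ 2 - u2 s))
        (g t * (2 * u2 t ^ 2 - u1 t * u3 t) / (u1 t ^ 2 - u2 t) ^ 2) t := by
    intro t ht hw
    have hwne : u1 t ^ 2 - u2 t ≠ 0 := ne_of_gt hw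
    have hnum : HasDerivAt (fun s => u1 s * g s) (u2 t * g t + u1 t * (u1 t * g t)) t :=
      (hu1At t ht).mul (hgAt t ht)
    have h1 := (hIAt t ht).fun_sub (hnum.fun_div (hwAt t ht) hwne)
    refine h1.congr_deriv ?_
    field_simp
    ring
  constructor
  · -- convex case
    intro hQ
    have hQ' : ∀ t > (0:ℝ), 2 * u2 t ^ 2 - u1 t * u3 t ≠ 0 := fun t ht => ne_of_gt (hQ t ht)
    have hw := hwpos hQ'
    have hDmono : StrictMonoOn
        (fun s => (∫ r in (0:ℝ)..s, g r) - u1 s * g s / (u1 s ^ 2 - u2 s)) (Set.Ioi 0) := by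
      apply strictMonoOn_of_deriv_pos (convex_Ioi 0)
      · intro s hs
        exact ((hDAt s hs (hw s hs)).continuousAt).continuousWithinAt
      · intro s hs
        rw [interior_Ioi] at hs
        rw [(hDAt s hs (hw s hs)).deriv]
        have h1 := hgpos s hs
        have h2 := hQ s hs
        have h3 := hw s hs
        positivity
    have hD0 : Tendsto (fun s => (∫ r in (0:ℝ)..s, g r) - u1 s * g s / (u1 s ^ 2 - u2 s))
        (𝓝[>] (0:ℝ)) (𝓝 0) := by
      have h1 := hIlim.sub hlim
      simpa using h1
    have hDnn : ∀ t ∈ Set.Ioi (0:ℝ),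
        0 ≤ (∫ r in (0:ℝ)..t, g r) - u1 t * g t / (u1 t ^ 2 - u2 t) := by
      intro t ht
      refine le_of_tendsto hD0 ?_
      filter_upwards [Ioo_mem_nhdsGT_of_mem (Set.left_mem_Ico.2 ht)] with s hs
      exact (hDmono (Set.mem_Ioi.2 hs.1) ht hs.2).le
    have hDpos : ∀ t ∈ Set.Ioi (0:ℝ),
        0 < (∫ r in (0:ℝ)..t, g r) - u1 t * g t / (u1 t ^ 2 - u2 t) := by
      intro t ht
      have ht' : (0:ℝ) < t := ht
      have h1 : (0:ℝ) < t / 2 := by linarith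
      exact lt_of_le_of_lt (hDnn (t/2) (Set.mem_Ioi.2 h1))
        (hDmono (Set.mem_Ioi.2 h1) ht (by linarith))
    apply strictConvexOn_of_deriv2_pos (convex_Ioi 0)
    · exact fun s hs => ((hhAt s hs).continuousAt).continuousWithinAt
    · intro x hx
      rw [interior_Ioi] at hx
      have key : deriv^[2] h x = deriv (deriv h) x := rfl
      rw [key, hh2 x hx]
      have hgx := hgpos x hx
      have hwx := hw x hx
      have hDx := hDpos x hx
      have heq : (u1 x ^ 2 - u2 x) * h x - u1 x
          = (u1 x ^ 2 - u2 x) * ((∫ r in (0:ℝ)..x, g r) - u1 x * g x / (u1 x ^ 2 - u2 x)) / g x := by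
        rw [hh x]
        field_simp
      rw [heq]
      positivity
  · -- concave case
    intro hQ
    have hQ' : ∀ t > (0:ℝ), 2 * u2 t ^ 2 - u1 t * u3 t ≠ 0 := fun t ht => ne_of_lt (hQ t ht)
    have hw := hwpos hQ'
    have hDanti : StrictAntiOn
        (fun s => (∫ r in (0:ℝ)..s, g r) - u1 s * g s / (u1 s ^ 2 - u2 s)) (Set.Ioi 0) := by
      apply strictAntiOn_of_deriv_neg (convex_Ioi 0)
      · intro s hs
        exact ((hDAt s hs (hw s hs)).continuousAt).continuousWithinAt
      · intro s hs
        rw [interior_Ioi] at hs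
        rw [(hDAt s hs (hw s hs)).deriv]
        have h1 := hgpos s hs
        have h2 := hQ s hs
        have h3 := hw s hs
        have h4 : (0:ℝ) < (u1 s ^ 2 - u2 s) ^ 2 := by positivity
        exact div_neg_of_neg_of_pos (by nlinarith) h4
    have hD0 : Tendsto (fun s => (∫ r in (0:ℝ)..s, g r) - u1 s * g s / (u1 s ^ 2 - u2 s))
        (𝓝[>] (0:ℝ)) (𝓝 0) := by
      have h1 := hIlim.sub hlim
      simpa using h1
    have hDnp : ∀ t ∈ Set.Ioi (0:ℝ),
        (∫ r in (0:ℝ)..t, g r) - u1 t * g t / (u1 t ^ 2 - u2 t) ≤ 0 := by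
      intro t ht
      refine ge_of_tendsto hD0 ?_
      filter_upwards [Ioo_mem_nhdsGT_of_mem (Set.left_mem_Ico.2 ht)] with s hs
      exact (hDanti (Set.mem_Ioi.2 hs.1) ht hs.2).le
    have hDneg : ∀ t ∈ Set.Ioi (0:ℝ),
        (∫ r in (0:ℝ)..t, g r) - u1 t * g t / (u1 t ^ 2 - u2 t) < 0 := by
      intro t ht
      have ht' : (0:ℝ) < t := ht
      have h1 : (0:ℝ) < t / 2 := by linarith
      exact lt_of_lt_of_le (hDanti (Set.mem_Ioi.2 h1) ht (by linarith))
        (hDnp (t/2) (Set.mem_Ioi.2 h1))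
    apply strictConcaveOn_of_deriv2_neg (convex_Ioi 0)
    · exact fun s hs => ((hhAt s hs).continuousAt).continuousWithinAt
    · intro x hx
      rw [interior_Ioi] at hx
      have key : deriv^[2] h x = deriv (deriv h) x := rfl
      rw [key, hh2 x hx]
      have hgx := hgpos x hx
      have hwx := hw x hx
      have hDx := hDneg x hx
      have heq : (u1 x ^ 2 - u2 x) * h x - u1 x
          = (u1 x ^ 2 - u2 x) * ((∫ r in (0:ℝ)..x, g r) - u1 x * g x / (u1 x ^ 2 - u2 x)) / g x := by
        rw [hh x]
        field_simp
      rw [heq]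
      exact div_neg_of_neg_of_pos (by nlinarith) hgx
end

section
/- Let f be a continuous function on an open interval I ⊆ ℝ such that for every y₀ ∈ I there exist a neighborhood U of y₀ and a convex function g : U → ℝ with g(y₀) = f(y₀) and g(y) ≤ f(y) for all y ∈ U. Then f is convex on I. -/
/-!
A convex minorant `g` touching `f` at `y₀` has a supporting line at `y₀` (with slope the right
derivative of `g`), and this line supports `f` near `y₀` as well. A continuous function with a
local supporting line at every point lies below its chords: otherwise `f` minus a chord has a
positive maximum inside the interval; at the rightmost maximiser the supporting line must be
horizontal (Fermat), so the maximal value persists slightly further right, a contradiction.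
-/

open Set Filter Topology

def HasLocalSupportLine (f : ℝ → ℝ) (t : ℝ) : Prop :=
  ∃ c : ℝ, ∀ᶠ y in 𝓝 t, f t + c * (y - t) ≤ f y

namespace HasLocalSupportLine

variable {f g : ℝ → ℝ} {t : ℝ}

theorem of_eventually_le (hg : HasLocalSupportLine g t) (hle : g ≤ᶠ[𝓝 t] f) (heq : g t = f t) :
    HasLocalSupportLine f t :=
  let ⟨c, hc⟩ := hg
  ⟨c, (hc.and hle).mono fun _ hy => heq ▸ hy.1.trans hy.2⟩

theorem sub_affine (hf : HasLocalSupportLine f t) (m q : ℝ) :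
    HasLocalSupportLine (fun y => f y - (m * y + q)) t :=
  let ⟨c, hc⟩ := hf
  ⟨c - m, hc.mono fun y hy => by linarith⟩

theorem eventually_eq_of_isLocalMax (hf : HasLocalSupportLine f t) (hmax : IsLocalMax f t) :
    ∀ᶠ y in 𝓝 t, f y = f t := by
  obtain ⟨c, hc⟩ := hf
  have hline_max : IsLocalMax (fun y => c * (y - t)) t :=
    (hc.and hmax).mono fun y hy => by simp only [sub_self, mul_zero]; linarith [hy.1, hy.2]
  have hc0 : c = 0 := by
    simpa using hline_max.hasDerivAt_eq_zero ((hasDerivAt_id t).sub_const t |>.const_mul c)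
  filter_upwards [hc, hmax] with y hy hy'
  rw [hc0] at hy
  linarith

end HasLocalSupportLine

theorem ConvexOn.add_rightDeriv_mul_sub_le {S : Set ℝ} {g : ℝ → ℝ} (hg : ConvexOn ℝ S g)
    {x y : ℝ} (hx : x ∈ interior S) (hy : y ∈ S) :
    g x + derivWithin g (Ioi x) x * (y - x) ≤ g y := by
  rcases lt_trichotomy y x with hyx | rfl | hxy
  · have hslope : slope g y x ≤ derivWithin g (Ioi x) x :=
      (hg.slope_le_leftDeriv_of_mem_interior hy hx hyx).trans
        (hg.leftDeriv_le_rightDeriv_of_mem_interior hx)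
    rw [slope_def_field, div_le_iff₀ (sub_pos.2 hyx)] at hslope
    linarith
  · simp
  · have hslope := hg.rightDeriv_le_slope_of_mem_interior hx hy hxy
    rw [slope_def_field, le_div_iff₀ (sub_pos.2 hxy)] at hslope
    linarith

theorem ConvexOn.hasLocalSupportLine {S : Set ℝ} {g : ℝ → ℝ} (hg : ConvexOn ℝ S g) {x : ℝ}
    (hx : x ∈ interior S) : HasLocalSupportLine g x :=
  ⟨_, eventually_of_mem (isOpen_interior.mem_nhds hx) fun _ hy =>
    hg.add_rightDeriv_mul_sub_le hx (interior_subset hy)⟩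

theorem nonpos_of_hasLocalSupportLine {f : ℝ → ℝ} {x z : ℝ} (hf : ContinuousOn f (Icc x z))
    (hsupp : ∀ t ∈ Ioo x z, HasLocalSupportLine f t) (hx : f x ≤ 0) (hz : f z ≤ 0) :
    ∀ w ∈ Icc x z, f w ≤ 0 := by
  by_contra! ⟨w, hw, hfw⟩
  obtain ⟨t₁, ht₁, hmax⟩ := isCompact_Icc.exists_isMaxOn ⟨w, hw⟩ hf
  set S := Icc x z ∩ f ⁻¹' {f t₁}
  have hS : IsCompact S := isCompact_Icc.of_isClosed_subset
    (hf.preimage_isClosed_of_isClosed isClosed_Icc isClosed_singleton) inter_subset_left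
  obtain ⟨t₀, ⟨ht₀, hft₀ : f t₀ = f t₁⟩, hgreatest⟩ := hS.exists_isGreatest ⟨t₁, ht₁, rfl⟩
  have hpos : 0 < f t₀ := hfw.trans_le (hft₀ ▸ hmax hw)
  have ht₀' : t₀ ∈ Ioo x z :=
    ⟨ht₀.1.lt_of_ne (by rintro rfl; linarith), ht₀.2.lt_of_ne (by rintro rfl; linarith)⟩
  have hIcc : Icc x z ∈ 𝓝 t₀ := Icc_mem_nhds ht₀'.1 ht₀'.2
  have hlocal : IsLocalMax f t₀ :=
    IsMaxOn.isLocalMax (fun y hy => (hmax hy).trans hft₀.ge) hIcc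
  have hflat : ∀ᶠ y in 𝓝 t₀, y ∈ S :=
    (((hsupp t₀ ht₀').eventually_eq_of_isLocalMax hlocal).and hIcc).mono
      fun y hy => ⟨hy.2, hy.1.trans hft₀⟩
  have hright : ∀ᶠ y in 𝓝[>] t₀, y ∈ S ∧ t₀ < y :=
    (hflat.filter_mono nhdsWithin_le_nhds).and self_mem_nhdsWithin
  obtain ⟨y, hyS, hty⟩ := hright.exists
  exact (hgreatest hyS).not_gt hty

theorem convexOn_of_hasLocalSupportLine {s : Set ℝ} {f : ℝ → ℝ} (hs : Convex ℝ s)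
    (hf : ContinuousOn f s) (hsupp : ∀ t ∈ interior s, HasLocalSupportLine f t) :
    ConvexOn ℝ s f := by
  refine LinearOrder.convexOn_of_lt hs fun x hx z hz hxz a b ha hb hab => ?_
  obtain rfl : a = 1 - b := by linarith
  have hIcc : Icc x z ⊆ s := hs.ordConnected.out hx hz
  set m := (f z - f x) / (z - x)
  have hm : m * (z - x) = f z - f x := div_mul_cancel₀ _ (sub_ne_zero.2 hxz.ne')
  have hw : (1 - b) * x + b * z ∈ Icc x z :=
    ⟨by nlinarith [mul_pos hb (sub_pos.2 hxz)], by nlinarith [mul_pos ha (sub_pos.2 hxz)]⟩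
  have hchord := nonpos_of_hasLocalSupportLine (f := fun y => f y - (m * y + (f x - m * x)))
    ((hf.mono hIcc).sub (by fun_prop))
    (fun t ht => (hsupp t (interior_mono hIcc (by rwa [interior_Icc]))).sub_affine _ _)
    (by simp) (by linarith) _ hw
  simp only [smul_eq_mul] at hchord ⊢
  linear_combination hchord + b * hm

/-- A continuous function on an open interval that is locally supported from
below at each point by a convex function touching it there is convex. -/
theorem stmt_7 (a b : ℝ) (f : ℝ → ℝ)
    (hf : ContinuousOn f (Set.Ioo a b))
    (hsupp : ∀ y₀ ∈ Set.Ioo a b, ∃ ε > 0, Set.Ioo (y₀ - ε) (y₀ + ε) ⊆ Set.Ioo a b ∧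
      ∃ g : ℝ → ℝ, ConvexOn ℝ (Set.Ioo (y₀ - ε) (y₀ + ε)) g ∧
        g y₀ = f y₀ ∧ ∀ y ∈ Set.Ioo (y₀ - ε) (y₀ + ε), g y ≤ f y) :
    ConvexOn ℝ (Set.Ioo a b) f := by
  refine convexOn_of_hasLocalSupportLine (convex_Ioo a b) hf fun t ht => ?_
  rw [interior_Ioo] at ht
  obtain ⟨ε, hε, -, g, hg, hgt, hgf⟩ := hsupp t ht
  have ht' : t ∈ Ioo (t - ε) (t + ε) := ⟨by linarith, by linarith⟩
  refine (hg.hasLocalSupportLine (by rwa [interior_Ioo])).of_eventually_le ?_ hgt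
  exact eventually_of_mem (isOpen_Ioo.mem_nhds ht') hgf
end
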